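/- Let C be a self-dual [24,12,10] code over F5 and let A5(C) = { (1/√5)·c : c ∈ ℤ^24, (c mod 5) ∈ C } ⊆ ℝ^24. Then every vector x ∈ A5(C) with ⟨x,x⟩ = 2 is of the form x = (1/√5)·c where c ∈ ℤ^24 has all entries in {-1, 0, 1} and exactly 10 nonzero entries (and (c mod 5) is a codeword of C of Hamming weight 10). -/

import Mathlib

/-!
Write `x = c / √5` with `c ∈ ℤ²⁴`, so `∑ cᵢ² = 10`. Every entry then has `cᵢ² ≤ 10 < 25`, so a
nonzero entry of `c` stays nonzero mod `5`, and the Hamming weight of `c mod 5` is the size of the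
support of `c`. Since each nonzero entry contributes at least `1` to `∑ cᵢ²`, the support has at
most `10` elements, while the minimum distance forces at least `10`. Equality leaves no room for
an entry with `cᵢ² > 1`.
-/

open Finset

theorem Int.intCast_zmod_eq_zero_iff_of_sq_lt {n : ℕ} {a : ℤ} (h : a ^ 2 < (n : ℤ) ^ 2) :
    (a : ZMod n) = 0 ↔ a = 0 := by
  refine ⟨fun ha => Int.eq_zero_of_abs_lt_dvd ((ZMod.intCast_zmod_eq_zero_iff_dvd a n).1 ha)
    (abs_lt_of_sq_lt_sq h (Int.natCast_nonneg n)), fun ha => by simp [ha]⟩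

theorem hammingNorm_intCast_zmod {ι : Type*} [Fintype ι] {n : ℕ} {c : ι → ℤ}
    (h : ∀ i, c i ^ 2 < (n : ℤ) ^ 2) :
    hammingNorm (fun i => (c i : ZMod n)) = #{i | c i ≠ 0} := by
  unfold hammingNorm
  congr 1
  exact filter_congr fun i _ => not_congr (Int.intCast_zmod_eq_zero_iff_of_sq_lt (h i))

theorem Int.ite_ne_zero_le_sq (a : ℤ) : (if a ≠ 0 then 1 else 0) ≤ a ^ 2 := by
  split_ifs with ha
  · exact (one_le_sq_iff_one_le_abs a).2 (Int.one_le_abs ha)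
  · positivity

theorem Int.ite_ne_zero_eq_sq_iff (a : ℤ) :
    (if a ≠ 0 then 1 else 0) = a ^ 2 ↔ a = -1 ∨ a = 0 ∨ a = 1 := by
  split_ifs with ha
  · rw [eq_comm, sq_eq_one_iff]
    tauto
  · simp_all

theorem Int.card_support_le_sum_sq {ι : Type*} (s : Finset ι) (c : ι → ℤ) :
    (#{i ∈ s | c i ≠ 0} : ℤ) ≤ ∑ i ∈ s, c i ^ 2 := by
  rw [← sum_boole]
  exact sum_le_sum fun i _ => Int.ite_ne_zero_le_sq (c i)

theorem Int.sum_sq_eq_card_support_iff {ι : Type*} (s : Finset ι) (c : ι → ℤ) :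
    ∑ i ∈ s, c i ^ 2 = #{i ∈ s | c i ≠ 0} ↔ ∀ i ∈ s, c i = -1 ∨ c i = 0 ∨ c i = 1 := by
  rw [← sum_boole, eq_comm, sum_eq_sum_iff_of_le fun i _ => Int.ite_ne_zero_le_sq (c i)]
  simp only [Int.ite_ne_zero_eq_sq_iff]

theorem sum_div_sqrt_mul_self {ι : Type*} (s : Finset ι) (c : ι → ℝ) {a : ℝ} (ha : 0 ≤ a) :
    ∑ i ∈ s, c i / √a * (c i / √a) = (∑ i ∈ s, c i ^ 2) / a := by
  simp_rw [div_mul_div_comm, Real.mul_self_sqrt ha, ← sq, sum_div]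

theorem constructionA_norm_two_vectors_general
    (C : Submodule (ZMod 5) (Fin 24 → ZMod 5))
    (hlow : ∀ c ∈ C, c ≠ 0 → 10 ≤ hammingNorm c)
    (L : Set (Fin 24 → ℝ))
    (hL : L = {x | ∃ c : Fin 24 → ℤ,
        (fun i => (c i : ZMod 5)) ∈ C ∧ x = fun i => (c i : ℝ) / Real.sqrt 5})
    (x : Fin 24 → ℝ) (hx : x ∈ L) (hnorm : ∑ i, x i * x i = 2) :
    ∃ c : Fin 24 → ℤ,
      (∀ i, c i = -1 ∨ c i = 0 ∨ c i = 1) ∧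
      (Finset.univ.filter (fun i => c i ≠ 0)).card = 10 ∧
      (fun i => (c i : ZMod 5)) ∈ C ∧
      hammingNorm (fun i => (c i : ZMod 5)) = 10 ∧
      x = fun i => (c i : ℝ) / Real.sqrt 5 := by
  subst hL
  obtain ⟨c, hcC, rfl⟩ := hx
  have hsum : ∑ i, c i ^ 2 = 10 := by
    rw [sum_div_sqrt_mul_self _ _ (by norm_num : (0 : ℝ) ≤ 5)] at hnorm
    have : ∑ i, (c i : ℝ) ^ 2 = 10 := by linarith [(div_eq_iff (by norm_num : (5 : ℝ) ≠ 0)).1 hnorm]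
    exact_mod_cast this
  have hweight : hammingNorm (fun i => (c i : ZMod 5)) = #{i | c i ≠ 0} :=
    hammingNorm_intCast_zmod fun i =>
      (single_le_sum (fun j _ => sq_nonneg (c j)) (mem_univ i)).trans_lt (by omega)
  have hne : (fun i => (c i : ZMod 5)) ≠ 0 := by
    intro h0
    rw [← hammingNorm_eq_zero, hweight, card_eq_zero, filter_eq_empty_iff] at h0
    simp_all
  have hcard : #{i | c i ≠ 0} = 10 := by
    have hle := Int.card_support_le_sum_sq univ c
    have hge := hweight ▸ hlow _ hcC hne
    omega
  refine ⟨c, fun i => (Int.sum_sq_eq_card_support_iff univ c).1 (by rw [hsum, hcard]; rfl) i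
    (mem_univ i), hcard, hcC, hweight.trans hcard, rfl⟩

/-- If `C` is a self-dual `[24,12,10]` code over `𝔽₅`, then every vector of norm `2` in
the Construction A lattice `A₅(C)` is of the form `(1/√5)·c` where `c ∈ ℤ²⁴` has all
entries in `{-1,0,1}` and exactly `10` nonzero entries, and `(c mod 5)` is a codeword
of `C` of Hamming weight `10`. -/
theorem constructionA_norm_two_vectors
    (C : Submodule (ZMod 5) (Fin 24 → ZMod 5))
    (hdim : Module.finrank (ZMod 5) C = 12)
    (hsd : ∀ x : Fin 24 → ZMod 5, x ∈ C ↔ ∀ c ∈ C, ∑ i, x i * c i = 0)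
    (hlow : ∀ c ∈ C, c ≠ 0 → 10 ≤ hammingNorm c)
    (hex : ∃ c ∈ C, c ≠ 0 ∧ hammingNorm c = 10)
    (L : Set (Fin 24 → ℝ))
    (hL : L = {x | ∃ c : Fin 24 → ℤ,
        (fun i => (c i : ZMod 5)) ∈ C ∧ x = fun i => (c i : ℝ) / Real.sqrt 5})
    (x : Fin 24 → ℝ) (hx : x ∈ L) (hnorm : ∑ i, x i * x i = 2) :
    ∃ c : Fin 24 → ℤ,
      (∀ i, c i = -1 ∨ c i = 0 ∨ c i = 1) ∧
      (Finset.univ.filter (fun i => c i ≠ 0)).card = 10 ∧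
      (fun i => (c i : ZMod 5)) ∈ C ∧
      hammingNorm (fun i => (c i : ZMod 5)) = 10 ∧
      x = fun i => (c i : ℝ) / Real.sqrt 5 :=
  constructionA_norm_two_vectors_general C hlow L hL x hx hnorm
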